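/- With notation as in the previous context but with μ supported on (−∞,0), the function f(γ) = ∫ Θ̂(T,y+z) q(z;γ) dz is negative and monotone decreasing in γ on (−∞,1). -/

import Mathlib

/-!
Both claims rest on Chebyshev's integral inequality: tilting a positive weight by a factor that
varies together with `h` can only increase the weighted mean of `h`. Tilting the prior by
`θ ↦ exp (θ (s₂ - s₁))` shows that the posterior mean `Θ̂` is increasing, and it is negative
because `μ` lives on `(-∞, 0)`. The same support condition makes `F` decreasing, so passing from
`γ₁` to `γ₂ > γ₁` tilts the weight `F (y + ·) ^ (1 / (1 - γ₁)) φ` by a decreasing power of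
`F (y + ·)`, which lowers the mean of the increasing function `Θ̂ (y + ·)`.
-/

open MeasureTheory Real

section WeightedMean

variable {α : Type*} [MeasurableSpace α] {ν : Measure α}

theorem integral_pos_of_ae_pos [NeZero ν] {f : α → ℝ} (hf : Integrable f ν)
    (hpos : ∀ᵐ x ∂ν, 0 < f x) : 0 < ∫ x, f x ∂ν := by
  rw [integral_pos_iff_support_of_nonneg_ae (hpos.mono fun _ hx => hx.le) hf]
  refine pos_iff_ne_zero.2 fun h0 => NeZero.ne ν (ae_eq_bot.1 ?_)
  exact Filter.eventually_false_iff_eq_bot.1 <|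
    (hpos.and (measure_eq_zero_iff_ae_notMem.1 h0)).mono fun _ hx => hx.2 hx.1.ne'

theorem integral_neg_of_ae_neg [NeZero ν] {f : α → ℝ} (hf : Integrable f ν)
    (hneg : ∀ᵐ x ∂ν, f x < 0) : ∫ x, f x ∂ν < 0 := by
  simpa [integral_neg] using integral_pos_of_ae_pos hf.neg (hneg.mono fun _ hx => neg_pos.2 hx)

theorem integral_mul_div_integral_of_eq_div {h W p : α → ℝ}
    (hp : ∀ x, p x = W x / ∫ y, W y ∂ν) (hN : 0 < ∫ x, W x ∂ν)
    (hint : Integrable (fun x => h x * p x) ν) :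
    Integrable (fun x => h x * W x) ν ∧
      ∫ x, h x * p x ∂ν = (∫ x, h x * W x ∂ν) / ∫ x, W x ∂ν := by
  have hhp : (fun x => h x * p x) = fun x => h x * W x / ∫ y, W y ∂ν :=
    funext fun x => by rw [hp, mul_div_assoc']
  rw [hhp] at hint ⊢
  refine ⟨?_, integral_div _ _⟩
  simpa only [div_mul_cancel₀ _ hN.ne'] using hint.mul_const (∫ x, W x ∂ν)

variable [SigmaFinite ν] {f g W₁ W₂ : α → ℝ}

/-- Chebyshev's integral inequality. -/
theorem integral_mul_integral_le_of_monovary (hfg : Monovary f g) (hW₁ : ∀ x, 0 ≤ W₁ x)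
    (hW₂ : ∀ x, W₂ x = g x * W₁ x) (i₁ : Integrable W₁ ν) (i₂ : Integrable W₂ ν)
    (j₁ : Integrable (fun x => f x * W₁ x) ν) (j₂ : Integrable (fun x => f x * W₂ x) ν) :
    (∫ x, f x * W₁ x ∂ν) * ∫ x, W₂ x ∂ν ≤ (∫ x, f x * W₂ x ∂ν) * ∫ x, W₁ x ∂ν := by
  have hcov : 0 ≤ ∫ z : α × α, (f z.2 - f z.1) * (g z.2 - g z.1) * (W₁ z.1 * W₁ z.2) ∂ν.prod ν :=
    integral_nonneg fun z => mul_nonneg (hfg.sub_mul_sub_nonneg _ _) (mul_nonneg (hW₁ _) (hW₁ _))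
  have hexpand : (fun z : α × α => (f z.2 - f z.1) * (g z.2 - g z.1) * (W₁ z.1 * W₁ z.2)) =
      fun z => (W₁ z.1 * (f z.2 * W₂ z.2) + f z.1 * W₂ z.1 * W₁ z.2) -
        (W₂ z.1 * (f z.2 * W₁ z.2) + f z.1 * W₁ z.1 * W₂ z.2) :=
    funext fun z => by simp only [hW₂]; ring
  have hpos : Integrable (fun z : α × α => W₁ z.1 * (f z.2 * W₂ z.2) + f z.1 * W₂ z.1 * W₁ z.2)
      (ν.prod ν) := (i₁.mul_prod j₂).add (j₂.mul_prod i₁)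
  have hneg : Integrable (fun z : α × α => W₂ z.1 * (f z.2 * W₁ z.2) + f z.1 * W₁ z.1 * W₂ z.2)
      (ν.prod ν) := (i₂.mul_prod j₁).add (j₁.mul_prod i₂)
  rw [hexpand, integral_sub hpos hneg, integral_add (i₁.mul_prod j₂) (j₂.mul_prod i₁),
    integral_add (i₂.mul_prod j₁) (j₁.mul_prod i₂), integral_prod_mul W₁ (fun x => f x * W₂ x),
    integral_prod_mul (fun x => f x * W₂ x) W₁, integral_prod_mul W₂ (fun x => f x * W₁ x),
    integral_prod_mul (fun x => f x * W₁ x) W₂] at hcov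
  linarith

theorem integral_mul_div_integral_le_of_monovary (hfg : Monovary f g) (hW₁ : ∀ x, 0 ≤ W₁ x)
    (hW₂ : ∀ x, W₂ x = g x * W₁ x) (i₁ : Integrable W₁ ν) (i₂ : Integrable W₂ ν)
    (j₁ : Integrable (fun x => f x * W₁ x) ν) (j₂ : Integrable (fun x => f x * W₂ x) ν)
    (hN₁ : 0 < ∫ x, W₁ x ∂ν) (hN₂ : 0 < ∫ x, W₂ x ∂ν) :
    (∫ x, f x * W₁ x ∂ν) / ∫ x, W₁ x ∂ν ≤ (∫ x, f x * W₂ x ∂ν) / ∫ x, W₂ x ∂ν := by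
  rw [div_le_div_iff₀ hN₁ hN₂]
  exact integral_mul_integral_le_of_monovary hfg hW₁ hW₂ i₁ i₂ j₁ j₂

end WeightedMean

theorem monotone_integral_mul_exp_div_integral_exp {μ : Measure ℝ} [SigmaFinite μ] [NeZero μ]
    (c : ℝ → ℝ) (h₀ : ∀ s, Integrable (fun θ => exp (θ * s - c θ)) μ)
    (h₁ : ∀ s, Integrable (fun θ => θ * exp (θ * s - c θ)) μ) :
    Monotone fun s => (∫ θ, θ * exp (θ * s - c θ) ∂μ) / ∫ θ, exp (θ * s - c θ) ∂μ := by
  intro s₁ s₂ hs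
  have htilt : Monotone fun θ : ℝ => exp (θ * (s₂ - s₁)) := fun a b hab =>
    exp_le_exp.2 (mul_le_mul_of_nonneg_right hab (sub_nonneg.2 hs))
  refine integral_mul_div_integral_le_of_monovary (f := fun θ => θ) (monotone_id.monovary htilt)
    (fun _ => (exp_pos _).le) (fun θ => ?_) (h₀ s₁) (h₀ s₂) (h₁ s₁) (h₁ s₂)
    (integral_exp_pos (h₀ s₁)) (integral_exp_pos (h₀ s₂))
  rw [← exp_add]
  ring_nf

theorem antitone_integral_exp_of_ae_nonpos {μ : Measure ℝ} (c : ℝ → ℝ)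
    (hsupp : ∀ᵐ θ ∂μ, θ ≤ 0) (h₀ : ∀ s, Integrable (fun θ => exp (θ * s - c θ)) μ) :
    Antitone fun s => ∫ θ, exp (θ * s - c θ) ∂μ := fun s₁ s₂ hs =>
  integral_mono_ae (h₀ s₂) (h₀ s₁) (hsupp.mono fun _ hθ =>
    exp_le_exp.2 (sub_le_sub_right (mul_le_mul_of_nonpos_left hs hθ) _))

theorem integral_mul_rpow_div_le_of_antitone {α : Type*} [LinearOrder α] [MeasurableSpace α]
    {ν : Measure α} [SigmaFinite ν] {h G w : α → ℝ} (hh : Monotone h) (hG : Antitone G)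
    (hGpos : ∀ x, 0 < G x) (hw : ∀ x, 0 ≤ w x) {p₁ p₂ : ℝ} (hp : p₁ ≤ p₂)
    (i₁ : Integrable (fun x => G x ^ p₁ * w x) ν) (i₂ : Integrable (fun x => G x ^ p₂ * w x) ν)
    (j₁ : Integrable (fun x => h x * (G x ^ p₁ * w x)) ν)
    (j₂ : Integrable (fun x => h x * (G x ^ p₂ * w x)) ν)
    (hN₁ : 0 < ∫ x, G x ^ p₁ * w x ∂ν) (hN₂ : 0 < ∫ x, G x ^ p₂ * w x ∂ν) :
    (∫ x, h x * (G x ^ p₂ * w x) ∂ν) / ∫ x, G x ^ p₂ * w x ∂ν ≤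
      (∫ x, h x * (G x ^ p₁ * w x) ∂ν) / ∫ x, G x ^ p₁ * w x ∂ν := by
  have htilt : Monotone fun x => G x ^ (p₁ - p₂) := fun a b hab =>
    rpow_le_rpow_of_nonpos (hGpos b) (hG hab) (sub_nonpos.2 hp)
  refine integral_mul_div_integral_le_of_monovary (hh.monovary htilt)
    (fun x => mul_nonneg (rpow_pos_of_pos (hGpos x) _).le (hw x)) (fun x => ?_) i₂ i₁ j₂ j₁ hN₂ hN₁
  rw [← mul_assoc, ← rpow_add (hGpos x), sub_add_cancel]

theorem stmt6_general (μ : Measure ℝ) [IsProbabilityMeasure μ]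
    (hsupp : ∀ᵐ θ ∂μ, θ < 0)
    (T t y : ℝ) (htT : t < T)
    (F Θhat : ℝ → ℝ)
    (hF : ∀ s, F s = ∫ θ, Real.exp (θ * s - θ ^ 2 * T / 2) ∂μ)
    (hΘ : ∀ s, Θhat s = (∫ θ, θ * Real.exp (θ * s - θ ^ 2 * T / 2) ∂μ) / F s)
    (hFint : ∀ s, Integrable (fun θ : ℝ => Real.exp (θ * s - θ ^ 2 * T / 2)) μ)
    (hNint : ∀ s, Integrable (fun θ : ℝ => θ * Real.exp (θ * s - θ ^ 2 * T / 2)) μ)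
    (φ : ℝ → ℝ)
    (hφ : ∀ z, φ z = Real.exp (-z ^ 2 / (2 * (T - t))) / Real.sqrt (2 * π * (T - t)))
    (q : ℝ → ℝ → ℝ)
    (hq : ∀ γ < (1:ℝ), ∀ z, q z γ =
      F (y + z) ^ (1 / (1 - γ)) * φ z / ∫ w, F (y + w) ^ (1 / (1 - γ)) * φ w)
    (hqint : ∀ γ < (1:ℝ), Integrable (fun w => F (y + w) ^ (1 / (1 - γ)) * φ w))
    (hfint : ∀ γ < (1:ℝ), Integrable (fun z => Θhat (y + z) * q z γ))
    (f : ℝ → ℝ) (hf : ∀ γ < (1:ℝ), f γ = ∫ z, Θhat (y + z) * q z γ) :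
    (∀ γ < (1:ℝ), f γ < 0) ∧ AntitoneOn f (Set.Iio 1) := by
  have hFpos : ∀ s, 0 < F s := fun s => hF s ▸ integral_exp_pos (hFint s)
  have hFanti : Antitone F := by
    convert antitone_integral_exp_of_ae_nonpos (fun θ => θ ^ 2 * T / 2)
      (hsupp.mono fun _ => le_of_lt) hFint using 2 with s
    exact hF s
  have hΘmono : Monotone Θhat := by
    convert monotone_integral_mul_exp_div_integral_exp (fun θ => θ ^ 2 * T / 2) hFint hNint
      using 2 with s
    rw [hΘ, hF]
  have hΘneg : ∀ s, Θhat s < 0 := fun s => hΘ s ▸ div_neg_of_neg_of_pos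
    (integral_neg_of_ae_neg (hNint s) (hsupp.mono fun θ hθ => mul_neg_of_neg_of_pos hθ (exp_pos _)))
    (hFpos s)
  have hφpos : ∀ z, 0 < φ z := fun z => hφ z ▸
    div_pos (exp_pos _) (sqrt_pos.2 (mul_pos (mul_pos two_pos pi_pos) (sub_pos.2 htT)))
  have hWpos : ∀ γ z : ℝ, 0 < F (y + z) ^ (1 / (1 - γ)) * φ z := fun γ z =>
    mul_pos (rpow_pos_of_pos (hFpos _) _) (hφpos z)
  have hNpos : ∀ γ < (1:ℝ), 0 < ∫ w, F (y + w) ^ (1 / (1 - γ)) * φ w := fun γ hγ =>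
    integral_pos_of_ae_pos (hqint γ hγ) (ae_of_all _ (hWpos γ))
  refine ⟨fun γ hγ => ?_, fun γ₁ hγ₁ γ₂ hγ₂ hle => ?_⟩
  · rw [hf γ hγ]
    refine integral_neg_of_ae_neg (hfint γ hγ) (ae_of_all _ fun z => ?_)
    exact mul_neg_of_neg_of_pos (hΘneg _) (hq γ hγ z ▸ div_pos (hWpos γ z) (hNpos γ hγ))
  · obtain ⟨hM₁, hf₁⟩ :=
      integral_mul_div_integral_of_eq_div (hq γ₁ hγ₁) (hNpos γ₁ hγ₁) (hfint γ₁ hγ₁)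
    obtain ⟨hM₂, hf₂⟩ :=
      integral_mul_div_integral_of_eq_div (hq γ₂ hγ₂) (hNpos γ₂ hγ₂) (hfint γ₂ hγ₂)
    rw [hf γ₁ hγ₁, hf γ₂ hγ₂, hf₁, hf₂]
    exact integral_mul_rpow_div_le_of_antitone (hΘmono.comp (monotone_id.const_add y))
      (hFanti.comp_monotone (monotone_id.const_add y)) (fun _ => hFpos _) (fun z => (hφpos z).le)
      (one_div_le_one_div_of_le (sub_pos.2 hγ₂) (by linarith [Set.mem_Iio.1 hγ₂]))
      (hqint γ₁ hγ₁) (hqint γ₂ hγ₂) hM₁ hM₂ (hNpos γ₁ hγ₁) (hNpos γ₂ hγ₂)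

/-- with μ a probability measure supported on `(-∞,0)` with finite first
moment, `F(T,y) = ∫ exp(θy - θ²T/2) dμ`, `Θ̂(T,y)` the posterior mean, and
`q(z;γ)` the normalized density `F(T,y+z)^{1/(1-γ)} φ_{T-t}(z)`, the function
`f(γ) = ∫ Θ̂(T,y+z) q(z;γ) dz` is negative and monotone decreasing on `(-∞,1)`. -/
theorem stmt6 (μ : Measure ℝ) [IsProbabilityMeasure μ]
    (hsupp : ∀ᵐ θ ∂μ, θ < 0)
    (hmom : Integrable (fun θ : ℝ => |θ|) μ)
    (T t y : ℝ) (ht : 0 ≤ t) (htT : t < T)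
    (F Θhat : ℝ → ℝ)
    (hF : ∀ s, F s = ∫ θ, Real.exp (θ * s - θ ^ 2 * T / 2) ∂μ)
    (hΘ : ∀ s, Θhat s = (∫ θ, θ * Real.exp (θ * s - θ ^ 2 * T / 2) ∂μ) / F s)
    (hFint : ∀ s, Integrable (fun θ : ℝ => Real.exp (θ * s - θ ^ 2 * T / 2)) μ)
    (hNint : ∀ s, Integrable (fun θ : ℝ => θ * Real.exp (θ * s - θ ^ 2 * T / 2)) μ)
    (φ : ℝ → ℝ)
    (hφ : ∀ z, φ z = Real.exp (-z ^ 2 / (2 * (T - t))) / Real.sqrt (2 * π * (T - t)))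
    (q : ℝ → ℝ → ℝ)
    (hq : ∀ γ < (1:ℝ), ∀ z, q z γ =
      F (y + z) ^ (1 / (1 - γ)) * φ z / ∫ w, F (y + w) ^ (1 / (1 - γ)) * φ w)
    (hqint : ∀ γ < (1:ℝ), Integrable (fun w => F (y + w) ^ (1 / (1 - γ)) * φ w))
    (hfint : ∀ γ < (1:ℝ), Integrable (fun z => Θhat (y + z) * q z γ))
    (f : ℝ → ℝ) (hf : ∀ γ < (1:ℝ), f γ = ∫ z, Θhat (y + z) * q z γ) :
    (∀ γ < (1:ℝ), f γ < 0) ∧ AntitoneOn f (Set.Iio 1) :=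
  stmt6_general μ hsupp T t y htT F Θhat hF hΘ hFint hNint φ hφ q hq hqint hfint f hf
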